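/- Let F be a field with char F ≠ 2 and consider O(2m+2, F) for the symmetric bilinear form that is an orthogonal direct sum of a 2m-dimensional nondegenerate block and a 2-dimensional nondegenerate block. The centralizer in O(2m+2, F) of a = diag(I_{2m}, -I₂) is isomorphic to O(2m, F) × O(2, F). Consequently, if O(2m+2, F) is acceptable then O(2m, F) is acceptable. -/
import Mathlib


/-- A group `G` is *acceptable* if for every finite group `H`, any two element-conjugate
homomorphisms `H → G` are globally conjugate. -/
def IsAcceptable (G : Type*) [Group G] : Prop :=
  ∀ (H : Type) (_ : Group H) (_ : Finite H) (φ₁ φ₂ : H →* G),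
    (∀ h : H, ∃ g : G, g * φ₁ h * g⁻¹ = φ₂ h) →
    ∃ g : G, ∀ h : H, g * φ₁ h * g⁻¹ = φ₂ h


open Matrix

/-- The subgroup of `GL n F` preserving the bilinear form with Gram matrix `J`,
i.e. matrices `A` with `ᵗA J A = J`. -/
def formGroup {n : Type*} [Fintype n] [DecidableEq n] {F : Type*} [Field F]
    (J : Matrix n n F) : Subgroup (GL n F) where
  carrier := {A | (A : Matrix n n F)ᵀ * J * (A : Matrix n n F) = J}
  one_mem' := by simp
  mul_mem' := by
    intro A B hA hB
    simp only [Set.mem_setOf_eq] at *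
    have hc : ((A * B : GL n F) : Matrix n n F) = (A : Matrix n n F) * B := rfl
    rw [hc, transpose_mul]
    calc (B : Matrix n n F)ᵀ * (A : Matrix n n F)ᵀ * J * ((A : Matrix n n F) * B)
        = (B : Matrix n n F)ᵀ * ((A : Matrix n n F)ᵀ * J * A) * B := by
          simp only [Matrix.mul_assoc]
      _ = J := by rw [hA]; exact hB
  inv_mem' := by
    intro A hA
    simp only [Set.mem_setOf_eq] at *
    have h1 : ((A : GL n F) : Matrix n n F) * ((A⁻¹ : GL n F) : Matrix n n F) = 1 :=
      A.mul_inv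
    calc ((A⁻¹ : GL n F) : Matrix n n F)ᵀ * J * ((A⁻¹ : GL n F) : Matrix n n F)
        = ((A⁻¹ : GL n F) : Matrix n n F)ᵀ * ((A : Matrix n n F)ᵀ * J * A) *
            ((A⁻¹ : GL n F) : Matrix n n F) := by rw [hA]
      _ = (((A : GL n F) : Matrix n n F) * ((A⁻¹ : GL n F) : Matrix n n F))ᵀ *
            (J * (((A : GL n F) : Matrix n n F) * ((A⁻¹ : GL n F) : Matrix n n F))) := by
          rw [transpose_mul]; simp only [Matrix.mul_assoc]
      _ = J := by rw [h1]; simp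

section Aux
variable {F : Type} [Field F] {p q : Type} [Fintype p] [Fintype q] [DecidableEq p] [DecidableEq q]

lemma block_of_comm (h2 : (2 : F) ≠ 0) (M : Matrix (p ⊕ q) (p ⊕ q) F)
    (h : M * fromBlocks 1 0 0 (-1) = fromBlocks (1 : Matrix p p F) 0 0 (-1) * M) :
    M = fromBlocks (M.toBlocks₁₁) 0 0 (M.toBlocks₂₂) := by
  rw [← fromBlocks_toBlocks M] at h
  rw [fromBlocks_multiply, fromBlocks_multiply] at h
  rw [fromBlocks_inj] at h
  obtain ⟨h11, h12, h21, h22⟩ := h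
  simp only [Matrix.mul_one, Matrix.one_mul, Matrix.mul_neg, Matrix.neg_mul, Matrix.mul_zero,
    Matrix.zero_mul, add_zero, zero_add, mul_zero] at h12 h21
  have hB : M.toBlocks₁₂ = 0 := by
    have : (2 : F) • M.toBlocks₁₂ = 0 := by
      rw [two_smul]; nth_rewrite 1 [← h12]; exact neg_add_cancel _
    rcases smul_eq_zero.mp this with h | h
    · exact absurd h h2
    · exact h
  have hC : M.toBlocks₂₁ = 0 := by
    have : (2 : F) • M.toBlocks₂₁ = 0 := by
      rw [two_smul]; nth_rewrite 1 [h21]; exact neg_add_cancel _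
    rcases smul_eq_zero.mp this with h | h
    · exact absurd h h2
    · exact h
  conv_lhs => rw [← fromBlocks_toBlocks M]
  rw [hB, hC]

lemma isUnit_of_form {A J : Matrix p p F} (hJ : IsUnit J) (hA : Aᵀ * J * A = J) : IsUnit A := by
  rw [Matrix.isUnit_iff_isUnit_det] at hJ ⊢
  rw [isUnit_iff_ne_zero] at hJ ⊢
  intro h0
  apply hJ
  have := congrArg Matrix.det hA
  rw [Matrix.det_mul, Matrix.det_mul, Matrix.det_transpose, h0] at this
  simpa using this.symm

def blockDiagRingHom (p q F : Type) [Fintype p] [Fintype q] [DecidableEq p] [DecidableEq q]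
    [Field F] : Matrix p p F × Matrix q q F →+* Matrix (p ⊕ q) (p ⊕ q) F where
  toFun x := fromBlocks x.1 0 0 x.2
  map_one' := fromBlocks_one
  map_mul' x y := by simp [fromBlocks_multiply]
  map_zero' := by simp [← fromBlocks_zero]
  map_add' x y := by simp [fromBlocks_add]

def blockDiagGL (p q F : Type) [Fintype p] [Fintype q] [DecidableEq p] [DecidableEq q]
    [Field F] : GL p F × GL q F →* GL (p ⊕ q) F :=
  (Units.map (blockDiagRingHom p q F).toMonoidHom).comp
    (MulEquiv.prodUnits (M := Matrix p p F) (N := Matrix q q F)).symm.toMonoidHom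

@[simp] lemma blockDiagGL_coe (x : GL p F) (y : GL q F) :
    ((blockDiagGL p q F (x, y) : GL (p ⊕ q) F) : Matrix (p ⊕ q) (p ⊕ q) F) =
      fromBlocks (x : Matrix p p F) 0 0 (y : Matrix q q F) := rfl

variable (J₁ : Matrix p p F) (J₂ : Matrix q q F)

lemma mem_formGroup_iff {n : Type*} [Fintype n] [DecidableEq n] (J : Matrix n n F)
    (x : GL n F) : x ∈ formGroup J ↔ (x : Matrix n n F)ᵀ * J * (x : Matrix n n F) = J :=
  Iff.rfl

lemma blockDiag_mem {x : GL p F} {y : GL q F} (hx : x ∈ formGroup J₁) (hy : y ∈ formGroup J₂) :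
    blockDiagGL p q F (x, y) ∈ formGroup (fromBlocks J₁ 0 0 J₂) := by
  rw [mem_formGroup_iff] at *
  rw [blockDiagGL_coe, fromBlocks_transpose, fromBlocks_multiply, fromBlocks_multiply]
  simp only [transpose_zero, Matrix.mul_zero, Matrix.zero_mul, add_zero, zero_add,
    hx, hy]

lemma centralizer_equiv (h2 : (2 : F) ≠ 0) (hJ₁ : IsUnit J₁) (hJ₂ : IsUnit J₂)
    (a : formGroup (fromBlocks J₁ 0 0 J₂))
    (ha : ((a : GL (p ⊕ q) F) : Matrix (p ⊕ q) (p ⊕ q) F) = fromBlocks 1 0 0 (-1)) :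
    Nonempty ((Subgroup.centralizer ({a} : Set (formGroup (fromBlocks J₁ 0 0 J₂))))
      ≃* formGroup J₁ × formGroup J₂) := by
  -- the homomorphism into G
  let Φ₀ : formGroup J₁ × formGroup J₂ →* GL (p ⊕ q) F :=
    (blockDiagGL p q F).comp (((formGroup J₁).subtype).prodMap ((formGroup J₂).subtype))
  have hΦ₀coe : ∀ u : formGroup J₁ × formGroup J₂,
      ((Φ₀ u : GL (p ⊕ q) F) : Matrix (p ⊕ q) (p ⊕ q) F) =
        fromBlocks ((u.1 : GL p F) : Matrix p p F) 0 0 ((u.2 : GL q F) : Matrix q q F) :=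
    fun u => rfl
  have hmemG : ∀ u : formGroup J₁ × formGroup J₂, Φ₀ u ∈ formGroup (fromBlocks J₁ 0 0 J₂) :=
    fun u => blockDiag_mem J₁ J₂ u.1.2 u.2.2
  let Φ : formGroup J₁ × formGroup J₂ →* formGroup (fromBlocks J₁ 0 0 J₂) := Φ₀.codRestrict _ hmemG
  have hmemC : ∀ u : formGroup J₁ × formGroup J₂,
      Φ u ∈ Subgroup.centralizer ({a} : Set (formGroup (fromBlocks J₁ 0 0 J₂))) := by
    intro u
    rw [Subgroup.mem_centralizer_iff]
    rintro g hg
    rw [Set.mem_singleton_iff] at hg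
    subst hg
    -- show a * Φ u = Φ u * a in G
    apply Subtype.ext
    apply Units.ext
    show (((g * Φ u : formGroup (fromBlocks J₁ 0 0 J₂)) : GL (p ⊕ q) F) :
      Matrix (p ⊕ q) (p ⊕ q) F) = (((Φ u * g : formGroup (fromBlocks J₁ 0 0 J₂)) :
      GL (p ⊕ q) F) : Matrix (p ⊕ q) (p ⊕ q) F)
    have hc : ∀ x y : formGroup (fromBlocks J₁ 0 0 J₂),
        (((x * y : formGroup (fromBlocks J₁ 0 0 J₂)) : GL (p ⊕ q) F) :
          Matrix (p ⊕ q) (p ⊕ q) F) =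
        ((x : GL (p ⊕ q) F) : Matrix (p ⊕ q) (p ⊕ q) F) *
        ((y : GL (p ⊕ q) F) : Matrix (p ⊕ q) (p ⊕ q) F) := fun x y => rfl
    rw [hc, hc, ha]
    have hΦu : (((Φ u : formGroup (fromBlocks J₁ 0 0 J₂)) : GL (p ⊕ q) F) :
        Matrix (p ⊕ q) (p ⊕ q) F) =
        fromBlocks ((u.1 : GL p F) : Matrix p p F) 0 0 ((u.2 : GL q F) : Matrix q q F) :=
      hΦ₀coe u
    rw [hΦu, fromBlocks_multiply, fromBlocks_multiply]
    simp
  let Ψ : formGroup J₁ × formGroup J₂ →* Subgroup.centralizer ({a} : Set (formGroup (fromBlocks J₁ 0 0 J₂))) :=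
    Φ.codRestrict _ hmemC
  have hΨbij : Function.Bijective Ψ := by
    constructor
    · intro u v huv
      have h1 : ((Φ₀ u : GL (p ⊕ q) F) : Matrix (p ⊕ q) (p ⊕ q) F) =
          ((Φ₀ v : GL (p ⊕ q) F) : Matrix (p ⊕ q) (p ⊕ q) F) := by
        have := congrArg (fun z => ((((z : Subgroup.centralizer ({a} : Set (formGroup (fromBlocks J₁ 0 0 J₂)))) :
          formGroup (fromBlocks J₁ 0 0 J₂)) :
          GL (p ⊕ q) F) : Matrix (p ⊕ q) (p ⊕ q) F)) huv
        exact this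
      rw [hΦ₀coe, hΦ₀coe, fromBlocks_inj] at h1
      obtain ⟨e1, -, -, e2⟩ := h1
      exact Prod.ext (Subtype.ext (Units.ext e1)) (Subtype.ext (Units.ext e2))
    · rintro ⟨⟨z, hzG⟩, hzC⟩
      set M : Matrix (p ⊕ q) (p ⊕ q) F := (z : Matrix (p ⊕ q) (p ⊕ q) F) with hM
      -- commutation with a
      have hcomm : M * fromBlocks 1 0 0 (-1) = fromBlocks (1 : Matrix p p F) 0 0 (-1) * M := by
        rw [Subgroup.mem_centralizer_iff] at hzC
        have h0 := hzC a (Set.mem_singleton a)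
        have hc : ∀ x y : formGroup (fromBlocks J₁ 0 0 J₂),
            (((x * y : formGroup (fromBlocks J₁ 0 0 J₂)) : GL (p ⊕ q) F) :
              Matrix (p ⊕ q) (p ⊕ q) F) =
            ((x : GL (p ⊕ q) F) : Matrix (p ⊕ q) (p ⊕ q) F) *
            ((y : GL (p ⊕ q) F) : Matrix (p ⊕ q) (p ⊕ q) F) := fun x y => rfl
        have h2' := congrArg (fun w : formGroup (fromBlocks J₁ 0 0 J₂) =>
          ((w : GL (p ⊕ q) F) : Matrix (p ⊕ q) (p ⊕ q) F)) h0
        simp only [hc] at h2'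
        rw [← ha]
        exact h2'.symm
      have hblk := block_of_comm h2 M hcomm
      -- form condition on blocks
      have hform : Mᵀ * fromBlocks J₁ 0 0 J₂ * M = fromBlocks J₁ 0 0 J₂ := hzG
      rw [hblk, fromBlocks_transpose, fromBlocks_multiply, fromBlocks_multiply,
        fromBlocks_inj] at hform
      obtain ⟨hf1, -, -, hf2⟩ := hform
      simp only [transpose_zero, Matrix.mul_zero, Matrix.zero_mul, add_zero, zero_add] at hf1 hf2
      have hA : IsUnit (M.toBlocks₁₁) := isUnit_of_form hJ₁ hf1
      have hB : IsUnit (M.toBlocks₂₂) := isUnit_of_form hJ₂ hf2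
      have hAmem : (hA.unit : GL p F) ∈ formGroup J₁ := by
        rw [mem_formGroup_iff]
        show (hA.unit : Matrix p p F)ᵀ * J₁ * (hA.unit : Matrix p p F) = J₁
        rw [hA.unit_spec]; exact hf1
      have hBmem : (hB.unit : GL q F) ∈ formGroup J₂ := by
        rw [mem_formGroup_iff]
        show (hB.unit : Matrix q q F)ᵀ * J₂ * (hB.unit : Matrix q q F) = J₂
        rw [hB.unit_spec]; exact hf2
      refine ⟨(⟨hA.unit, hAmem⟩, ⟨hB.unit, hBmem⟩), ?_⟩
      apply Subtype.ext
      apply Subtype.ext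
      apply Units.ext
      show fromBlocks (hA.unit : Matrix p p F) 0 0 (hB.unit : Matrix q q F) = M
      rw [hA.unit_spec, hB.unit_spec]
      exact hblk.symm
  exact ⟨(MulEquiv.ofBijective Ψ hΨbij).symm⟩
end Aux

lemma isAcceptable_of_mulEquiv {G₁ G₂ : Type*} [Group G₁] [Group G₂] (e : G₁ ≃* G₂)
    (h1 : IsAcceptable G₁) : IsAcceptable G₂ := by
  intro H _ _ φ₁ φ₂ hel
  obtain ⟨g, hg⟩ := h1 H ‹_› ‹_› (e.symm.toMonoidHom.comp φ₁) (e.symm.toMonoidHom.comp φ₂)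
    (by
      intro h
      obtain ⟨g, hg⟩ := hel h
      exact ⟨e.symm g, by simpa [_root_.map_mul, _root_.map_inv] using congrArg e.symm hg⟩)
  refine ⟨e g, fun h => ?_⟩
  have := congrArg e (hg h)
  simpa [_root_.map_mul, _root_.map_inv] using this

lemma isAcceptable_fst {K₁ K₂ : Type*} [Group K₁] [Group K₂]
    (h : IsAcceptable (K₁ × K₂)) : IsAcceptable K₁ := by
  intro H _ _ φ₁ φ₂ hel
  obtain ⟨g, hg⟩ := h H ‹_› ‹_› (φ₁.prod 1) (φ₂.prod 1)
    (by
      intro h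
      obtain ⟨g, hg⟩ := hel h
      exact ⟨(g, 1), by simp [Prod.ext_iff, hg]⟩)
  exact ⟨g.1, fun h => congrArg Prod.fst (hg h)⟩

lemma isAcceptable_centralizer {G : Type*} [Group G] (a : G) (ha2 : a * a = 1)
    (hG : IsAcceptable G) : IsAcceptable (Subgroup.centralizer ({a} : Set G)) := by
  intro H hHgrp hHfin φ₁ φ₂ hel
  haveI := hHfin
  have key : ∀ n : ℕ, a ^ n = a ^ (n % 2) := by
    intro n
    conv_lhs => rw [← Nat.div_add_mod n 2]
    rw [pow_add, pow_mul, (show a ^ 2 = 1 by rw [pow_two, ha2]), one_pow, one_mul]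
  have hcases : ∀ x : ZMod 2, x = 0 ∨ x = 1 := by decide
  let ψ : Multiplicative (ZMod 2) →* G := {
    toFun := fun x => a ^ (Multiplicative.toAdd x : ZMod 2).val
    map_one' := by simp
    map_mul' := by
      intro x y
      show a ^ (Multiplicative.toAdd (x * y) : ZMod 2).val = _
      rw [toAdd_mul, ZMod.val_add, ← key, pow_add] }
  have hψval : ∀ x : Multiplicative (ZMod 2), ψ x = 1 ∨ ψ x = a := by
    intro x
    rcases hcases (Multiplicative.toAdd x) with hx | hx
    · left
      show a ^ (Multiplicative.toAdd x : ZMod 2).val = 1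
      rw [hx, ZMod.val_zero, pow_zero]
    · right
      show a ^ (Multiplicative.toAdd x : ZMod 2).val = a
      rw [hx, ZMod.val_one, pow_one]
  have hψa : ψ (Multiplicative.ofAdd 1) = a := by
    show a ^ ((1 : ZMod 2)).val = a
    exact pow_one a
  have hcommC : ∀ (c : Subgroup.centralizer ({a} : Set G)) (x : Multiplicative (ZMod 2)),
      Commute ((c : G)) (ψ x) := by
    intro c x
    rcases hψval x with h | h <;> rw [h]
    · exact Commute.one_right _
    · exact ((Subgroup.mem_centralizer_iff.mp c.2) a (Set.mem_singleton a)).symm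
  let Φ₁ : H × Multiplicative (ZMod 2) →* G :=
    MonoidHom.noncommCoprod ((Subgroup.centralizer ({a} : Set G)).subtype.comp φ₁) ψ
      (fun m n => hcommC (φ₁ m) n)
  let Φ₂ : H × Multiplicative (ZMod 2) →* G :=
    MonoidHom.noncommCoprod ((Subgroup.centralizer ({a} : Set G)).subtype.comp φ₂) ψ
      (fun m n => hcommC (φ₂ m) n)
  obtain ⟨g, hg⟩ := hG (H × Multiplicative (ZMod 2)) inferInstance inferInstance Φ₁ Φ₂
    (by
      rintro ⟨h, x⟩
      obtain ⟨c, hc⟩ := hel h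
      refine ⟨(c : G), ?_⟩
      have hc' : (c : G) * (φ₁ h : G) * (c : G)⁻¹ = (φ₂ h : G) := by
        have := congrArg (fun z : Subgroup.centralizer ({a} : Set G) => (z : G)) hc
        simpa using this
      show (c : G) * ((φ₁ h : G) * ψ x) * (c : G)⁻¹ = (φ₂ h : G) * ψ x
      have hcx : Commute ((c : G)) (ψ x) := hcommC c x
      calc (c : G) * ((φ₁ h : G) * ψ x) * (c : G)⁻¹
          = ((c : G) * (φ₁ h : G) * (c : G)⁻¹) * ((c : G) * ψ x * (c : G)⁻¹) := by
            group
        _ = (φ₂ h : G) * ψ x := by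
            rw [hc', hcx.eq, mul_assoc, mul_inv_cancel, mul_one])
  have hga : g * a * g⁻¹ = a := by
    have h0 := hg (1, Multiplicative.ofAdd 1)
    have e1 : Φ₁ (1, Multiplicative.ofAdd 1) = a := by
      show ((Subgroup.centralizer ({a} : Set G)).subtype.comp φ₁) 1 *
        ψ (Multiplicative.ofAdd 1) = a
      rw [_root_.map_one, one_mul, hψa]
    have e2 : Φ₂ (1, Multiplicative.ofAdd 1) = a := by
      show ((Subgroup.centralizer ({a} : Set G)).subtype.comp φ₂) 1 *
        ψ (Multiplicative.ofAdd 1) = a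
      rw [_root_.map_one, one_mul, hψa]
    rw [e1, e2] at h0
    exact h0
  have hgC : g ∈ Subgroup.centralizer ({a} : Set G) := by
    rw [Subgroup.mem_centralizer_iff]
    rintro y hy
    rw [Set.mem_singleton_iff] at hy
    rw [hy]
    calc a * g = g * (g⁻¹ * a * g) := by group
      _ = g * a := by
          congr 1
          calc g⁻¹ * a * g = g⁻¹ * (g * a * g⁻¹) * g := by rw [hga]
            _ = a := by group
  refine ⟨⟨g, hgC⟩, fun h => ?_⟩
  have h0 := hg (h, 1)
  have e1 : Φ₁ (h, 1) = (φ₁ h : G) := by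
    show ((Subgroup.centralizer ({a} : Set G)).subtype.comp φ₁) h * ψ 1 = (φ₁ h : G)
    rw [_root_.map_one, mul_one]; rfl
  have e2 : Φ₂ (h, 1) = (φ₂ h : G) := by
    show ((Subgroup.centralizer ({a} : Set G)).subtype.comp φ₂) h * ψ 1 = (φ₂ h : G)
    rw [_root_.map_one, mul_one]; rfl
  rw [e1, e2] at h0
  exact Subtype.ext (by simpa using h0)


theorem O_even_acceptable_descends (F : Type) [Field F] (hchar : (2 : F) ≠ 0) (m : ℕ)
    (J₁ : Matrix (Fin (2 * m)) (Fin (2 * m)) F) (hJ₁ : J₁ᵀ = J₁) (hJ₁' : IsUnit J₁)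
    (J₂ : Matrix (Fin 2) (Fin 2) F) (hJ₂ : J₂ᵀ = J₂) (hJ₂' : IsUnit J₂) :
    (∀ a : formGroup (Matrix.fromBlocks J₁ 0 0 J₂ :
        Matrix (Fin (2 * m) ⊕ Fin 2) (Fin (2 * m) ⊕ Fin 2) F),
      ((a : GL (Fin (2 * m) ⊕ Fin 2) F) :
          Matrix (Fin (2 * m) ⊕ Fin 2) (Fin (2 * m) ⊕ Fin 2) F) =
        Matrix.fromBlocks 1 0 0 (-1) →
      Nonempty ((Subgroup.centralizer
          ({a} : Set (formGroup (Matrix.fromBlocks J₁ 0 0 J₂ :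
            Matrix (Fin (2 * m) ⊕ Fin 2) (Fin (2 * m) ⊕ Fin 2) F))))
        ≃* formGroup J₁ × formGroup J₂)) ∧
    (IsAcceptable (formGroup (Matrix.fromBlocks J₁ 0 0 J₂ :
        Matrix (Fin (2 * m) ⊕ Fin 2) (Fin (2 * m) ⊕ Fin 2) F)) →
      IsAcceptable (formGroup J₁)) := by
  constructor
  · intro a ha
    exact centralizer_equiv J₁ J₂ hchar hJ₁' hJ₂' a ha
  · intro hacc
    have hinv : (fromBlocks (1 : Matrix (Fin (2 * m)) (Fin (2 * m)) F) 0 0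
        (-1 : Matrix (Fin 2) (Fin 2) F)) * fromBlocks 1 0 0 (-1) = 1 := by
      rw [fromBlocks_multiply]
      simp [← fromBlocks_one]
    let aGL : GL (Fin (2 * m) ⊕ Fin 2) F :=
      ⟨fromBlocks 1 0 0 (-1), fromBlocks 1 0 0 (-1), hinv, hinv⟩
    have haform : aGL ∈ formGroup (fromBlocks J₁ 0 0 J₂) := by
      show (fromBlocks (1 : Matrix (Fin (2 * m)) (Fin (2 * m)) F) 0 0
          (-1 : Matrix (Fin 2) (Fin 2) F))ᵀ * fromBlocks J₁ 0 0 J₂ *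
          fromBlocks 1 0 0 (-1) = fromBlocks J₁ 0 0 J₂
      rw [fromBlocks_transpose, fromBlocks_multiply, fromBlocks_multiply]
      simp
    let a₀ : formGroup (fromBlocks J₁ 0 0 J₂) := ⟨aGL, haform⟩
    have ha₀ : ((a₀ : GL (Fin (2 * m) ⊕ Fin 2) F) :
        Matrix (Fin (2 * m) ⊕ Fin 2) (Fin (2 * m) ⊕ Fin 2) F) = fromBlocks 1 0 0 (-1) := rfl
    have ha2 : a₀ * a₀ = 1 := by
      apply Subtype.ext
      apply Units.ext
      exact hinv
    obtain ⟨e⟩ := centralizer_equiv J₁ J₂ hchar hJ₁' hJ₂' a₀ ha₀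
    exact isAcceptable_fst (isAcceptable_of_mulEquiv e (isAcceptable_centralizer a₀ ha2 hacc))
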